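/- arXiv:2411.01486 — 2 statements merged into one kernel-verified Lean document; each statement's English description precedes it below -/
import Mathlib

section
/- There exists a constant C such that for all sufficiently large n and every integer k > (2/3)n + C, the following holds: for every simple graph G on n vertices and every k-spanner H of G, there exists a spanning subgraph R of G such that R is a k-spanner of G, R has girth at least k+2, and the number of edges of R is at most the number of edges of H. -/
/-!
If `H` is a forest it already has infinite girth. Otherwise `H` has at least `n - c + 1` edges,
where `c` is the number of components, the same for every spanner of `G`. A maximal subgraph `R`
of `G` of girth at least `k + 2` is a `k`-spanner, and it has at most `n - c + 1` edges: two edges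
beyond a spanning forest of `R` would give a cycle of length `L ≥ k + 2` and two vertices at
distance `d ≥ k + 1`; a shortest path meets the cycle in at most `L / 2 + 1` vertices, so
`L + 2 d ≤ 2 n`, which contradicts `3 k > 2 n`.
-/

/-- `H` is a `k`-spanner of `G`: a spanning subgraph with
`dist_H(u,v) ≤ k * dist_G(u,v)` for all pairs (using extended distances,
so the condition is vacuous for pairs disconnected in `G`). -/
def IsKSpanner {V : Type*} (G H : SimpleGraph V) (k : ℕ) : Prop :=
  H ≤ G ∧ ∀ u v : V, H.edist u v ≤ (k : ℕ∞) * G.edist u v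

/-- `H` is a minimum `k`-spanner of `G`: a `k`-spanner with the fewest edges. -/
def IsMinKSpanner {V : Type*} (G H : SimpleGraph V) (k : ℕ) : Prop :=
  IsKSpanner G H k ∧
    ∀ H' : SimpleGraph V, IsKSpanner G H' k → H.edgeSet.ncard ≤ H'.edgeSet.ncard

open scoped Finset

namespace SimpleGraph

variable {V : Type*} {G : SimpleGraph V} {a b u v x y : V}

lemma Reachable.of_sup_edge (h : (G ⊔ edge u v).Reachable x y) :
    G.Reachable x y ∨ G.Reachable x u ∨ G.Reachable x v := by
  obtain ⟨w⟩ := h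
  induction w with
  | nil => exact .inl .rfl
  | cons hxz _ ih =>
    rcases hxz with hxz | hxz
    · have hr := hxz.reachable
      exact ih.imp hr.trans (Or.imp hr.trans hr.trans)
    · rw [edge_adj] at hxz
      rcases hxz.1 with ⟨rfl, -⟩ | ⟨rfl, -⟩
      · exact .inr (.inl .rfl)
      · exact .inr (.inr .rfl)

lemma card_connectedComponent_congr {H : SimpleGraph V} (h : G.Reachable = H.Reachable) :
    Nat.card G.ConnectedComponent = Nat.card H.ConnectedComponent := by
  unfold ConnectedComponent
  rw [h]

lemma card_connectedComponent_sup_edge_add_one [Finite V] (h : ¬G.Reachable u v) :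
    Nat.card (G ⊔ edge u v).ConnectedComponent + 1 = Nat.card G.ConnectedComponent := by
  set φ := ConnectedComponent.map (Hom.ofLE (le_sup_left : G ≤ G ⊔ edge u v))
  have hne : u ≠ v := by rintro rfl; exact h .rfl
  have huv : (G ⊔ edge u v).Reachable u v :=
    Adj.reachable (Or.inr (by rw [edge_adj]; simp [hne]))
  have hbij : Function.Bijective
      (fun c : ({G.connectedComponentMk u}ᶜ : Set G.ConnectedComponent) => φ c) := by
    constructor
    · rintro ⟨c, hc⟩ ⟨c', hc'⟩ hcc'
      induction c using ConnectedComponent.ind with | h x => ?_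
      induction c' using ConnectedComponent.ind with | h y => ?_
      simp only [Set.mem_compl_iff, Set.mem_singleton_iff,
        ConnectedComponent.eq] at hc hc'
      have hxy : (G ⊔ edge u v).Reachable x y := ConnectedComponent.exact hcc'
      simp only [Subtype.mk.injEq, ConnectedComponent.eq]
      rcases hxy.of_sup_edge with hxy | hxu | hxv
      · exact hxy
      · exact (hc hxu).elim
      rcases hxy.symm.of_sup_edge with hyx | hyu | hyv
      · exact hyx.symm
      · exact (hc' hyu).elim
      · exact hxv.trans hyv.symm
    · intro c
      induction c using ConnectedComponent.ind with | h z => ?_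
      by_cases hz : G.Reachable z u
      · refine ⟨⟨G.connectedComponentMk v, ?_⟩, ?_⟩
        · simpa [ConnectedComponent.eq] using fun hvu => h hvu.symm
        · exact ConnectedComponent.sound ((hz.mono le_sup_left).trans huv).symm
      · exact ⟨⟨G.connectedComponentMk z, by simpa [ConnectedComponent.eq] using hz⟩, rfl⟩
  rw [← Nat.card_eq_of_bijective _ hbij, Nat.card_coe_set_eq, add_comm,
    ← Set.ncard_singleton (G.connectedComponentMk u), Set.ncard_add_ncard_compl]

lemma card_connectedComponent_bot [Finite V] :
    Nat.card (⊥ : SimpleGraph V).ConnectedComponent = Nat.card V := by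
  refine (Nat.card_eq_of_bijective (⊥ : SimpleGraph V).connectedComponentMk ⟨?_, ?_⟩).symm
  · intro a b hab
    exact reachable_bot.mp (ConnectedComponent.exact hab)
  · exact ConnectedComponent.ind fun z => ⟨z, rfl⟩

lemma ncard_edgeSet_sup_edge [Finite V] (hne : u ≠ v) (h : ¬G.Adj u v) :
    (G ⊔ edge u v).edgeSet.ncard = G.edgeSet.ncard + 1 := by
  rw [edgeSet_sup, edgeSet_edge_of_ne hne, Set.union_singleton,
    Set.ncard_insert_of_notMem (by simpa using h)]

theorem IsAcyclic.ncard_edgeSet_add_card_connectedComponent [Finite V] (hG : G.IsAcyclic) :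
    G.edgeSet.ncard + Nat.card G.ConnectedComponent = Nat.card V := by
  induction hm : G.edgeSet.ncard generalizing G with
  | zero =>
    rw [Set.ncard_eq_zero, edgeSet_eq_empty] at hm
    rw [hm, card_connectedComponent_bot, zero_add]
  | succ m ih =>
    obtain ⟨e, he⟩ : G.edgeSet.Nonempty := Set.nonempty_of_ncard_ne_zero (by omega)
    induction e using Sym2.ind with | h u v => ?_
    set G' := G \ edge u v
    have hG' : G' ⊔ edge u v = G := sdiff_sup_cancel ((G.edge_le_iff).mpr (.inr he))
    have hne : u ≠ v := G.ne_of_adj he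
    have hnadj : ¬G'.Adj u v := by simp [G', edge_adj, hne]
    rw [← hG', isAcyclic_sup_fromEdgeSet_iff] at hG
    have hnr : ¬G'.Reachable u v := fun hr => (hG.2 hr).elim hne hnadj
    rw [← hG', ncard_edgeSet_sup_edge hne hnadj, Nat.add_right_cancel_iff] at hm
    rw [← ih hG.1 hm, ← hG', ← card_connectedComponent_sup_edge_add_one hnr]
    ring

theorem add_one_le_ncard_edgeSet_add_card_connectedComponent [Finite V] (hG : ¬G.IsAcyclic) :
    Nat.card V + 1 ≤ G.edgeSet.ncard + Nat.card G.ConnectedComponent := by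
  obtain ⟨F, hFG, hF, hreach⟩ := G.exists_isAcyclic_reachable_eq_le
  have hlt : F.edgeSet ⊂ G.edgeSet :=
    edgeSet_ssubset_edgeSet.mpr (lt_of_le_of_ne hFG (by rintro rfl; exact hG hF))
  rw [← hF.ncard_edgeSet_add_card_connectedComponent, card_connectedComponent_congr hreach]
  have := Set.ncard_lt_ncard hlt
  omega

lemma Walk.two_mul_dist_le_length [DecidableEq V] {c : G.Walk a a} (hx : x ∈ c.support)
    (hy : y ∈ c.support) : 2 * G.dist x y ≤ c.length := by
  set c' := c.rotate x hx
  have hy' : y ∈ c'.support := (c.mem_support_rotate_iff x hx).mpr hy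
  have h₁ := dist_le (c'.takeUntil y hy')
  have h₂ := dist_le (c'.dropUntil y hy')
  have hlen := congrArg Walk.length (c'.take_spec hy')
  rw [Walk.length_append, Walk.length_rotate] at hlen
  rw [dist_comm] at h₂
  omega

lemma Walk.le_add_dist_getVert {p : G.Walk u v} (hp : p.length = G.dist u v) {i j : ℕ}
    (hj : j ≤ p.length) : j ≤ i + G.dist (p.getVert i) (p.getVert j) := by
  have h₁ : G.dist u (p.getVert i) ≤ i :=
    (dist_le (p.take i)).trans (by simp [Walk.take_length])
  have h₂ : G.dist (p.getVert j) v ≤ p.length - j :=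
    (dist_le (p.drop j)).trans (by simp [Walk.drop_length])
  have hij : G.Reachable (p.getVert i) (p.getVert j) :=
    (p.take i).reachable.symm.trans (p.take j).reachable
  have t₁ := (p.take i).reachable.dist_triangle_left v
  have t₂ := hij.dist_triangle_left v
  omega

lemma Walk.card_support_inter_le [DecidableEq V] {p : G.Walk u v} (hp : p.length = G.dist u v)
    {S : Finset V} {d : ℕ} (hS : ∀ x ∈ S, ∀ y ∈ S, G.dist x y ≤ d) :
    #(p.support.toFinset ∩ S) ≤ d + 1 := by
  set I := (Finset.range (p.length + 1)).filter (p.getVert · ∈ S)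
  have hsub : p.support.toFinset ∩ S ⊆ I.image p.getVert := by
    intro z hz
    simp only [Finset.mem_inter, List.mem_toFinset, Walk.mem_support_iff_exists_getVert] at hz
    obtain ⟨⟨i, rfl, hi⟩, hzS⟩ := hz
    exact Finset.mem_image.mpr ⟨i, by simp [I, hzS]; omega, rfl⟩
  refine (Finset.card_le_card hsub).trans (Finset.card_image_le.trans ?_)
  rcases I.eq_empty_or_nonempty with hI | hI
  · simp [hI]
  set i₀ := I.min' hI
  have hi₀ : i₀ ∈ I := I.min'_mem hI
  have hIcc : I ⊆ Finset.Icc i₀ (i₀ + d) := by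
    intro j hj
    have hle : i₀ ≤ j := I.min'_le j hj
    simp only [I, Finset.mem_filter, Finset.mem_range] at hj hi₀
    have := p.le_add_dist_getVert hp (i := i₀) (j := j) (by omega)
    have := hS _ hi₀.2 _ hj.2
    simp only [Finset.mem_Icc]
    omega
  have := Finset.card_le_card hIcc
  rw [Nat.card_Icc] at this
  omega

theorem Walk.IsCycle.length_add_two_mul_dist_le [Fintype V] {c : G.Walk a a} (hc : c.IsCycle)
    (x y : V) : c.length + 2 * G.dist x y ≤ 2 * Fintype.card V := by
  classical
  set S := c.tail.support.toFinset
  have hS : #S = c.length := by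
    rw [List.toFinset_card_of_nodup hc.isPath_tail.support_nodup, Walk.length_support,
      Walk.length_tail_add_one hc.not_nil]
  have hSc : ∀ z ∈ S, z ∈ c.support := fun z hz => by
    rw [← Walk.cons_support_tail hc.not_nil]
    exact List.mem_cons_of_mem _ (List.mem_toFinset.mp hz)
  by_cases hr : G.Reachable x y
  swap
  · rw [dist_eq_zero_of_not_reachable hr]
    have := Finset.card_le_univ S
    omega
  obtain ⟨p, hpath, hp⟩ := hr.exists_path_of_dist
  set P := p.support.toFinset
  have hP : #P = G.dist x y + 1 := by
    rw [List.toFinset_card_of_nodup hpath.support_nodup, Walk.length_support, hp]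
  have hPS : #(P ∩ S) ≤ c.length / 2 + 1 := by
    refine p.card_support_inter_le hp fun z hz w hw => ?_
    have := c.two_mul_dist_le_length (hSc z hz) (hSc w hw)
    omega
  have := Finset.card_union_add_card_inter P S
  have := Finset.card_le_univ (P ∪ S)
  omega

lemma exists_isCycle_sup_edge (hr : G.Reachable u v) (hne : u ≠ v) (hadj : ¬G.Adj u v) :
    ∃ c : (G ⊔ edge u v).Walk v v, c.IsCycle ∧ c.length = G.dist u v + 1 := by
  obtain ⟨p, hp, hlen⟩ := hr.exists_path_of_dist
  have hvu : (G ⊔ edge u v).Adj v u := Or.inr (by rw [edge_adj]; simp [hne.symm])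
  refine ⟨.cons hvu (p.mapLe le_sup_left), ?_, by simp [hlen]⟩
  rw [Walk.cons_isCycle_iff, Walk.edges_mapLe_eq_edges]
  exact ⟨hp.mapLe _, fun he => hadj (p.adj_of_mem_edges he).symm⟩

lemma Walk.exists_split_of_mem_edges {e : Sym2 V} (w : G.Walk a b) (hw : w.edges.Nodup)
    (he : e ∈ w.edges) :
    ∃ (x y : V) (w₁ : G.Walk a x) (w₂ : G.Walk y b), e = s(x, y) ∧ e ∉ w₁.edges ∧
      e ∉ w₂.edges ∧ w₁.length + w₂.length + 1 = w.length := by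
  induction w with
  | nil => simp at he
  | @cons c d _ h p ih =>
    rw [Walk.edges_cons, List.nodup_cons] at hw
    rw [Walk.edges_cons, List.mem_cons] at he
    rcases he with rfl | he
    · exact ⟨c, d, .nil, p, rfl, by simp, hw.1, by simp⟩
    · obtain ⟨x, y, w₁, w₂, rfl, h₁, h₂, hlen⟩ := ih hw.2 he
      refine ⟨x, y, .cons h w₁, w₂, rfl, ?_, h₂, by simp [← hlen]; omega⟩
      rw [Walk.edges_cons, List.mem_cons, not_or]
      exact ⟨fun h' => hw.1 (h' ▸ he), h₁⟩

lemma mem_edgeSet_of_mem_edgeSet_sup_edge {e : Sym2 V} (he : e ∈ (G ⊔ edge u v).edgeSet)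
    (hne : e ≠ s(u, v)) : e ∈ G.edgeSet := by
  rw [edgeSet_sup] at he
  exact he.resolve_right fun h => hne (edgeSet_edge_subset h)

/-- A cycle of `G ⊔ edge u v` either avoids the new edge or closes a `u`-`v` walk of `G`. -/
lemma min_egirth_edist_add_one_le_egirth_sup_edge :
    min G.egirth (G.edist u v + 1) ≤ (G ⊔ edge u v).egirth := by
  classical
  refine le_egirth.mpr fun a c hc => ?_
  by_cases he : s(u, v) ∈ c.edges
  · obtain ⟨x, y, w₁, w₂, hxy, h₁, h₂, hlen⟩ := c.exists_split_of_mem_edges hc.edges_nodup he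
    have havoid : ∀ f ∈ (w₂.append w₁).edges, f ∈ G.edgeSet := by
      intro f hf
      rw [Walk.edges_append, List.mem_append] at hf
      refine mem_edgeSet_of_mem_edgeSet_sup_edge (u := u) (v := v) ?_ ?_
      · exact hf.elim (w₂.edges_subset_edgeSet ·) (w₁.edges_subset_edgeSet ·)
      · rintro rfl; exact hf.elim h₂ h₁
    have hd : G.edist u v ≤ w₁.length + w₂.length := by
      have := edist_le ((w₂.append w₁).transfer G havoid)
      rw [Walk.length_transfer, Walk.length_append, add_comm] at this
      rcases Sym2.eq_iff.mp hxy with ⟨rfl, rfl⟩ | ⟨rfl, rfl⟩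
      · rwa [edist_comm]
      · exact_mod_cast this
    refine min_le_of_right_le ?_
    rw [← hlen]
    push_cast
    gcongr
  · have hG : ∀ f ∈ c.edges, f ∈ G.edgeSet := fun f hf =>
      mem_edgeSet_of_mem_edgeSet_sup_edge (c.edges_subset_edgeSet hf) (ne_of_mem_of_not_mem hf he)
    refine min_le_of_left_le ((egirth_le_length (hc.transfer hG)).trans ?_)
    rw [Walk.length_transfer]

lemma ncard_edgeSet_le_ncard_edgeSet_add_one [Finite V] {F R : SimpleGraph V} (hFR : F ≤ R)
    (hreach : F.Reachable = R.Reachable) {g : ℕ} (hR : (g : ℕ∞) ≤ R.egirth)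
    (hg : 2 * Nat.card V + 2 < 3 * g) :
    R.edgeSet.ncard ≤ F.edgeSet.ncard + 1 := by
  have := Fintype.ofFinite V
  by_contra! hlt
  have hdiff : 1 < (R.edgeSet \ F.edgeSet).ncard := by
    rw [Set.ncard_sdiff (edgeSet_mono hFR)]
    omega
  obtain ⟨e₁, e₂, he₁, he₂, hne⟩ := (Set.one_lt_ncard_iff).mp hdiff
  induction e₁ using Sym2.ind with | h a b => ?_
  induction e₂ using Sym2.ind with | h x y => ?_
  have hab : R.Adj a b := he₁.1
  have hxy : R.Adj x y := he₂.1
  have hBR : F ⊔ edge a b ≤ R := sup_le hFR ((R.edge_le_iff).mpr (.inr hab))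
  have hBxy : ¬(F ⊔ edge a b).Adj x y := by
    rintro (h | h)
    · exact he₂.2 h
    · exact hne ((adj_edge _ _).mp h).1
  have hFreach : ∀ {s t : V}, R.Adj s t → F.Reachable s t := fun h => hreach ▸ h.reachable
  obtain ⟨c, hc, -⟩ := exists_isCycle_sup_edge (hFreach hab) hab.ne he₁.2
  obtain ⟨c', hc', hlen'⟩ :=
    exists_isCycle_sup_edge ((hFreach hxy).mono le_sup_left) hxy.ne hBxy
  have h₁ : g ≤ c.length := by
    exact_mod_cast hR.trans ((egirth_anti hBR).trans (egirth_le_length hc))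
  have h₂ : g ≤ (F ⊔ edge a b).dist x y + 1 := by
    have := (egirth_anti (sup_le hBR ((R.edge_le_iff).mpr (.inr hxy)))).trans
      (egirth_le_length hc')
    rw [hlen'] at this
    exact_mod_cast hR.trans this
  have := hc.length_add_two_mul_dist_le x y
  rw [← Nat.card_eq_fintype_card] at this
  omega

theorem ncard_edgeSet_add_card_connectedComponent_le [Finite V] {g : ℕ}
    (hG : (g : ℕ∞) ≤ G.egirth) (hg : 2 * Nat.card V + 2 < 3 * g) :
    G.edgeSet.ncard + Nat.card G.ConnectedComponent ≤ Nat.card V + 1 := by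
  obtain ⟨F, hFG, hF, hreach⟩ := G.exists_isAcyclic_reachable_eq_le
  rw [← hF.ncard_edgeSet_add_card_connectedComponent, card_connectedComponent_congr hreach]
  have := ncard_edgeSet_le_ncard_edgeSet_add_one hFG hreach hG hg
  omega

lemma edist_le_mul_length {R : SimpleGraph V} {k : ℕ}
    (h : ∀ u v, G.Adj u v → R.edist u v ≤ k) (w : G.Walk u v) :
    R.edist u v ≤ k * w.length := by
  induction w with
  | nil => simp
  | cons hadj _ ih =>
    rw [Walk.length_cons, Nat.cast_add, Nat.cast_one, mul_add, mul_one, add_comm]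
    exact R.edist_triangle.trans (add_le_add (h _ _ hadj) ih)

end SimpleGraph

open SimpleGraph

variable {V : Type*} {G H : SimpleGraph V} {k : ℕ}

lemma IsKSpanner.of_adj (hk : k ≠ 0) (hHG : H ≤ G)
    (h : ∀ u v, G.Adj u v → H.edist u v ≤ k) : IsKSpanner G H k := by
  refine ⟨hHG, fun u v => ?_⟩
  by_cases hr : G.Reachable u v
  · obtain ⟨p, hp⟩ := hr.exists_walk_length_eq_edist
    rw [← hp]
    exact edist_le_mul_length h p
  · rw [edist_eq_top_of_not_reachable hr, ENat.mul_top (by exact_mod_cast hk)]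
    exact le_top

lemma IsKSpanner.reachable_eq (h : IsKSpanner G H k) : H.Reachable = G.Reachable := by
  ext u v
  refine ⟨fun hr => hr.mono h.1, fun hr => ?_⟩
  rw [← edist_ne_top_iff_reachable] at hr ⊢
  exact ne_top_of_le_ne_top (WithTop.mul_ne_top (ENat.natCast_ne_top k) hr) (h.2 u v)

/-- Take `R` maximal among subgraphs of `G` of girth at least `k + 2`: an edge of `G` missing from
`R` would close a cycle of length at most `k + 1`. -/
theorem SimpleGraph.exists_isKSpanner_le_egirth [Finite V] (G : SimpleGraph V) (hk : k ≠ 0) :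
    ∃ R, IsKSpanner G R k ∧ (k + 2 : ℕ∞) ≤ R.egirth := by
  obtain ⟨R, -, hR⟩ := Finite.exists_le_maximal
    (p := fun R : SimpleGraph V => R ≤ G ∧ (k + 2 : ℕ∞) ≤ R.egirth) (a := ⊥) ⟨bot_le, by simp⟩
  refine ⟨R, IsKSpanner.of_adj hk hR.prop.1 fun u v huv => ?_, hR.prop.2⟩
  by_cases hadj : R.Adj u v
  · rw [edist_eq_one_iff_adj.mpr hadj]
    exact_mod_cast Nat.one_le_iff_ne_zero.mpr hk
  have hsup : ¬(k + 2 : ℕ∞) ≤ (R ⊔ edge u v).egirth := fun h =>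
    hR.not_prop_of_gt (R.lt_sup_edge u v huv.ne hadj)
      ⟨sup_le hR.prop.1 ((G.edge_le_iff).mpr (.inr huv)), h⟩
  have hlt := (min_egirth_edist_add_one_le_egirth_sup_edge (G := R)).trans_lt (not_le.mp hsup)
  rw [min_lt_iff, or_iff_right (not_lt.mpr hR.prop.2)] at hlt
  have hfin : R.edist u v ≠ ⊤ := by rintro h; simp [h] at hlt
  lift R.edist u v to ℕ using hfin with d
  have : d + 1 < k + 2 := by exact_mod_cast hlt
  exact_mod_cast (by omega : d ≤ k)

/-- there is a constant `C` such that for all sufficiently large `n`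
and every `k > (2/3)n + C`, for every `k`-spanner `H` of an `n`-vertex graph `G`
there is a `k`-spanner `R` of `G` with girth at least `k+2` and at most as many
edges as `H`. -/
theorem exists_highGirth_spanner_no_blowup :
    ∃ C N : ℕ, ∀ n : ℕ, N ≤ n → ∀ k : ℕ, 2 * n + 3 * C < 3 * k →
      ∀ G H : SimpleGraph (Fin n), IsKSpanner G H k →
        ∃ R : SimpleGraph (Fin n), R ≤ G ∧ IsKSpanner G R k ∧
          (k + 2 : ℕ∞) ≤ R.egirth ∧ R.edgeSet.ncard ≤ H.edgeSet.ncard := by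
  refine ⟨0, 0, fun n _ k hk G H hH => ?_⟩
  by_cases hHacyc : H.IsAcyclic
  · exact ⟨H, hH.1, hH, hHacyc.egirth_eq_top ▸ le_top, le_rfl⟩
  obtain ⟨R, hR, hRgirth⟩ := G.exists_isKSpanner_le_egirth (k := k) (by omega)
  refine ⟨R, hR.1, hR, hRgirth, ?_⟩
  have hRcount := ncard_edgeSet_add_card_connectedComponent_le (g := k + 2)
    (by exact_mod_cast hRgirth) (by rw [Nat.card_fin]; omega)
  have hHcount := add_one_le_ncard_edgeSet_add_card_connectedComponent hHacyc
  have := card_connectedComponent_congr (hR.reachable_eq.trans hH.reachable_eq.symm)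
  omega
end

section
/- There exists a constant C such that for all sufficiently large n and every integer k > (2/3)n + C the following holds: if G is a simple graph on n vertices and H is a k-spanner of G whose girth L satisfies L < 2(n − k), then there exist an edge e of H lying on a cycle of H of length L and a set F of edges of G with |F| ≤ 1 such that the graph H' obtained from H by removing e and adding the edges of F is a k-spanner of G, and no edge of F lies on a cycle of length at most k+1 in H'. -/
/-!
Delete any edge `e` of a shortest cycle of `H`; since `e` is not a bridge, `H - e` has the same
components as `H`. If some `G`-edge `uv` is stretched beyond `k` in `H - e`, add `uv` as the
single new edge. A `G`-edge `ab` still stretched beyond `k` would give geodesics `p : a → b` and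
`q : u → v` in `H - e`, both of length `≥ k + 1`. With `2n ≤ 3k + 3` they cannot be disjoint, and
going from `a` along `p` to its first vertex on `q`, around `q` through `uv` to the last vertex of
`p` on `q`, and on along `p` to `b` takes at most `2n - (|p| + |q| + 1) ≤ k` steps. Finally, a cycle
through `uv` of length `≤ k + 1` would leave a `u`-`v` path of length `≤ k` in `H - e`.
-/

namespace SimpleGraph

variable {V : Type*} {G : SimpleGraph V} {u v : V}

theorem Walk.dist_getVert_le (p : G.Walk u v) {i j : ℕ} (hij : i ≤ j) :
    G.dist (p.getVert i) (p.getVert j) ≤ j - i := by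
  have h := dist_le ((p.drop i).take (j - i))
  simp only [take_length, drop_getVert, Nat.add_sub_cancel' hij] at h
  omega

theorem Walk.dist_getVert_eq_of_length_eq_dist (p : G.Walk u v) (hp : p.length = G.dist u v)
    {i j : ℕ} (hij : i ≤ j) (hj : j ≤ p.length) :
    G.dist (p.getVert i) (p.getVert j) = j - i := by
  have h := length_eq_dist_of_subwalk hp
    (((p.drop i).isSubwalk_take (j - i)).trans (p.isSubwalk_drop i))
  simp only [take_length, drop_length, drop_getVert, Nat.add_sub_cancel' hij] at h
  omega

/-- `i` and `j` are the first and last visits of `p` to `s`. -/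
theorem Walk.exists_getVert_mem_card_inter_le [DecidableEq V] (p : G.Walk u v) (s : Finset V)
    (hs : ∃ w ∈ p.support, w ∈ s) :
    ∃ i j, i ≤ j ∧ j ≤ p.length ∧ p.getVert i ∈ s ∧ p.getVert j ∈ s ∧
      (p.support.toFinset ∩ s).card ≤ j - i + 1 := by
  set T := (Finset.range (p.length + 1)).filter (p.getVert · ∈ s)
  have hT : ∀ {w}, w ∈ p.support → w ∈ s → ∃ i ∈ T, p.getVert i = w := by
    intro w hw hws
    obtain ⟨i, rfl, hi⟩ := mem_support_iff_exists_getVert.mp hw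
    exact ⟨i, Finset.mem_filter.mpr ⟨Finset.mem_range.mpr (by omega), hws⟩, rfl⟩
  obtain ⟨w, hw, hws⟩ := hs
  have hTne : T.Nonempty := let ⟨i, hi, _⟩ := hT hw hws; ⟨i, hi⟩
  obtain ⟨hmin_range, hmin_mem⟩ := Finset.mem_filter.mp (T.min'_mem hTne)
  obtain ⟨hmax_range, hmax_mem⟩ := Finset.mem_filter.mp (T.max'_mem hTne)
  refine ⟨T.min' hTne, T.max' hTne, T.min'_le _ (T.max'_mem hTne),
    Nat.lt_succ_iff.mp (Finset.mem_range.mp hmax_range), hmin_mem, hmax_mem, ?_⟩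
  calc (p.support.toFinset ∩ s).card
      ≤ ((Finset.Icc (T.min' hTne) (T.max' hTne)).image p.getVert).card := by
        refine Finset.card_le_card fun z hz => ?_
        rw [Finset.mem_inter, List.mem_toFinset] at hz
        obtain ⟨i, hiT, rfl⟩ := hT hz.1 hz.2
        exact Finset.mem_image_of_mem _ (Finset.mem_Icc.mpr ⟨T.min'_le _ hiT, T.le_max' _ hiT⟩)
    _ ≤ (Finset.Icc (T.min' hTne) (T.max' hTne)).card := Finset.card_image_le
    _ = T.max' hTne - T.min' hTne + 1 := by
        have := T.min'_le _ (T.max'_mem hTne)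
        rw [Nat.card_Icc]; omega

theorem Walk.IsPath.card_support_toFinset [DecidableEq V] {p : G.Walk u v} (hp : p.IsPath) :
    p.support.toFinset.card = p.length + 1 := by
  rw [List.toFinset_card_of_nodup hp.support_nodup, length_support]

theorem dist_sup_edge_le_one (u v : V) : (G ⊔ edge u v).dist u v ≤ 1 := by
  rcases eq_or_ne u v with rfl | huv
  · simp
  · exact (dist_eq_one_iff_adj.mpr (Or.inr ((edge_adj ..).mpr ⟨Or.inl ⟨rfl, rfl⟩, huv⟩))).le

/-- Both the piece of `q` between `x` and `y` and its complement closed up by `uv` join `x` to `y`. -/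
theorem Walk.dist_sup_edge_add_dist_le (q : G.Walk u v) {x y : V} (hx : x ∈ q.support)
    (hy : y ∈ q.support) : (G ⊔ edge u v).dist x y + G.dist x y ≤ q.length + 1 := by
  obtain ⟨i, rfl, hi⟩ := mem_support_iff_exists_getVert.mp hx
  obtain ⟨j, rfl, hj⟩ := mem_support_iff_exists_getVert.mp hy
  clear hx hy
  wlog hij : i ≤ j generalizing i j
  · rw [dist_comm, G.dist_comm]
    exact this j hj i hi (by omega)
  set G' := G ⊔ edge u v
  have hle : G ≤ G' := le_sup_left
  have hxu : G'.dist (q.getVert i) u ≤ i := calc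
    G'.dist (q.getVert i) u ≤ G.dist u (q.getVert i) := by
      rw [dist_comm]; exact (q.take i).reachable.dist_anti hle
    _ ≤ i := by simpa using q.dist_getVert_le (Nat.zero_le i)
  have hvy : G'.dist v (q.getVert j) ≤ q.length - j := calc
    G'.dist v (q.getVert j) ≤ G.dist (q.getVert j) v := by
      rw [dist_comm]; exact (q.drop j).reachable.dist_anti hle
    _ ≤ q.length - j := by simpa using q.dist_getVert_le hj
  have hdetour : G'.dist (q.getVert i) (q.getVert j) ≤ i + 1 + (q.length - j) := calc
    G'.dist (q.getVert i) (q.getVert j)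
        ≤ G'.dist (q.getVert i) u + (G'.dist u v + G'.dist v (q.getVert j)) := by
          refine ((q.take i).reverse.reachable.mono hle).dist_triangle_left _ |>.trans ?_
          gcongr
          exact (q.reachable.mono hle).dist_triangle_left _
    _ ≤ i + (1 + (q.length - j)) := by gcongr; exact dist_sup_edge_le_one u v
    _ = i + 1 + (q.length - j) := by ring
  have := q.dist_getVert_le hij
  omega

theorem Walk.dist_sup_edge_add_length_add_length_le [Fintype V] [DecidableEq V] {a b : V}
    (p : G.Walk a b) (hp : p.length = G.dist a b) (q : G.Walk u v) (hq : q.IsPath)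
    (hpq : ∃ w ∈ p.support, w ∈ q.support) :
    (G ⊔ edge u v).dist a b + p.length + q.length + 1 ≤ 2 * Fintype.card V := by
  set G' := G ⊔ edge u v
  have hle : G ≤ G' := le_sup_left
  obtain ⟨i, j, hij, hj, hi_mem, hj_mem, hinter⟩ :=
    p.exists_getVert_mem_card_inter_le q.support.toFinset (by simpa using hpq)
  rw [List.mem_toFinset] at hi_mem hj_mem
  have hcount : p.length + q.length + 1 ≤ Fintype.card V + (j - i) := by
    have hunion := Finset.card_union_add_card_inter p.support.toFinset q.support.toFinset
    have := (p.support.toFinset ∪ q.support.toFinset).card_le_univ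
    rw [(p.isPath_of_length_eq_dist hp).card_support_toFinset, hq.card_support_toFinset] at hunion
    omega
  have hroute : G'.dist a b ≤ i + G'.dist (p.getVert i) (p.getVert j) + (p.length - j) := calc
    G'.dist a b ≤ G'.dist a (p.getVert i) + G'.dist (p.getVert i) (p.getVert j)
        + G'.dist (p.getVert j) b := by
      refine ((p.take i).reachable.mono hle).dist_triangle_left _ |>.trans ?_
      rw [add_assoc]
      gcongr
      exact ((q.takeUntil _ hi_mem).reverse.append (q.takeUntil _ hj_mem)).reachable.mono
        hle |>.dist_triangle_left _
    _ ≤ G.dist a (p.getVert i) + G'.dist (p.getVert i) (p.getVert j)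
        + G.dist (p.getVert j) b := by
      gcongr
      · exact (p.take i).reachable
      · exact (p.drop j).reachable
    _ ≤ i + G'.dist (p.getVert i) (p.getVert j) + (p.length - j) := by
      gcongr
      · simpa using p.dist_getVert_le (Nat.zero_le i)
      · simpa using p.dist_getVert_le hj
  have hdetour : G'.dist (p.getVert i) (p.getVert j) + G.dist (p.getVert i) (p.getVert j)
      ≤ q.length + 1 := q.dist_sup_edge_add_dist_le hi_mem hj_mem
  rw [p.dist_getVert_eq_of_length_eq_dist hp hij hj] at hdetour
  omega

theorem dist_sup_edge_le_of_lt_dist [Fintype V] {a b : V} {k : ℕ}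
    (hk : 2 * Fintype.card V ≤ 3 * k + 3) (hab : G.Reachable a b) (huv : G.Reachable u v)
    (hkab : k < G.dist a b) (hkuv : k < G.dist u v) : (G ⊔ edge u v).dist a b ≤ k := by
  classical
  obtain ⟨p, hp, hpl⟩ := hab.exists_path_of_dist
  obtain ⟨q, hq, hql⟩ := huv.exists_path_of_dist
  by_cases hpq : ∃ w ∈ p.support, w ∈ q.support
  · have := p.dist_sup_edge_add_length_add_length_le hpl q hq hpq
    omega
  · push Not at hpq
    have hdisj : (p.support ++ q.support).Nodup :=
      List.nodup_append.mpr ⟨hp.support_nodup, hq.support_nodup, fun x hx y hy => by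
        rintro rfl; exact hpq x hx hy⟩
    have := hdisj.length_le_card
    simp only [List.length_append, Walk.length_support] at this
    omega

theorem reachable_deleteEdges_of_not_isBridge {x y a b : V} (hb : ¬G.IsBridge s(x, y))
    (h : G.Reachable a b) : (G.deleteEdges {s(x, y)}).Reachable a b := by
  rw [isBridge_iff, not_not] at hb
  obtain ⟨p⟩ := h
  induction p with
  | nil => rfl
  | @cons a c b hadj _ ih =>
    refine Reachable.trans ?_ ih
    by_cases hac : s(a, c) = s(x, y)
    · rcases Sym2.eq_iff.mp hac with ⟨rfl, rfl⟩ | ⟨rfl, rfl⟩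
      exacts [hb, hb.symm]
    · exact Adj.reachable (by simp [hadj, hac])

/-- Cutting a closed trail at both ends of one of its edges `uv` leaves two `u`-`v` walks,
and the one not using `uv` is strictly shorter than the trail. -/
theorem Walk.IsTrail.edist_deleteEdges_lt_length {w : V} {c : G.Walk w w} (hc : c.IsTrail)
    (he : s(u, v) ∈ c.edges) : (G.deleteEdges {s(u, v)}).edist u v < c.length := by
  classical
  have hu : u ∈ c.support := c.fst_mem_support_of_mem_edges he
  set c' := c.rotate u hu
  have hc' : c'.IsTrail := hc.rotate hu
  have he' : s(u, v) ∈ c'.edges := (c.rotate_edges u hu).mem_iff.mpr he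
  have hv : v ∈ c'.support := c'.snd_mem_support_of_mem_edges he'
  have hlen : c'.length = c.length := c.length_rotate u hu
  have hsplit : c'.length = (c'.takeUntil v hv).length + (c'.dropUntil v hv).length := by
    rw [← length_append, take_spec]
  have hdisj := hc'.disjoint_edges_takeUntil_dropUntil hv
  suffices ∃ p : G.Walk u v, s(u, v) ∉ p.edges ∧ p.length < c.length by
    obtain ⟨p, hpe, hpl⟩ := this
    refine lt_of_le_of_lt ?_ (Nat.cast_lt.mpr hpl)
    simpa using edist_le (p.toDeleteEdge _ hpe)
  rw [← take_spec c' hv, edges_append, List.mem_append] at he'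
  rcases he' with he' | he'
  · refine ⟨(c'.dropUntil v hv).reverse, by simpa using hdisj he', ?_⟩
    have := List.length_pos_of_mem he'
    rw [length_edges] at this
    simp only [length_reverse]
    omega
  · refine ⟨c'.takeUntil v hv, fun h => hdisj h he', ?_⟩
    have := List.length_pos_of_mem he'
    rw [length_edges] at this
    omega

theorem edist_le_mul_length_of_forall_adj {H : SimpleGraph V} {k : ℕ}
    (h : ∀ a b, G.Adj a b → H.edist a b ≤ k) (p : G.Walk u v) : H.edist u v ≤ k * p.length := by
  induction p with
  | nil => simp
  | @cons u x v hadj _ ih =>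
    calc H.edist u v ≤ H.edist u x + H.edist x v := SimpleGraph.edist_triangle
      _ ≤ k + k * _ := add_le_add (h _ _ hadj) ih
      _ = k * (Walk.cons hadj _).length := by rw [Walk.length_cons]; push_cast; ring

end SimpleGraph

namespace IsKSpanner

open SimpleGraph

variable {V : Type*} {G H : SimpleGraph V} {k : ℕ}

theorem edist_le_of_adj (hH : IsKSpanner G H k) {a b : V} (hab : G.Adj a b) :
    H.edist a b ≤ k := by
  simpa [edist_eq_one_iff_adj.mpr hab] using hH.2 a b

theorem of_forall_adj (hk : k ≠ 0) (hle : H ≤ G) (h : ∀ a b, G.Adj a b → H.edist a b ≤ k) :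
    IsKSpanner G H k := by
  refine ⟨hle, fun u v => ?_⟩
  by_cases huv : G.Reachable u v
  · obtain ⟨p, hp⟩ := huv.exists_walk_length_eq_edist
    rw [← hp]
    exact edist_le_mul_length_of_forall_adj h p
  · rw [edist_eq_top_of_not_reachable huv, ENat.mul_top (by exact_mod_cast hk)]
    exact le_top

theorem exists_deleteEdges_sup_isKSpanner [Fintype V] (hk : 2 * Fintype.card V ≤ 3 * k + 3)
    (hk0 : k ≠ 0) (hH : IsKSpanner G H k) {e : Sym2 V} (he : ¬H.IsBridge e) :
    ∃ F ⊆ G.edgeSet, F.ncard ≤ 1 ∧ IsKSpanner G (H.deleteEdges {e} ⊔ fromEdgeSet F) k ∧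
      ∀ f ∈ F, ∀ (v : V) (c : (H.deleteEdges {e} ⊔ fromEdgeSet F).Walk v v),
        c.IsCycle → f ∈ c.edges → k + 1 < c.length := by
  obtain ⟨x, y⟩ := e
  set H₁ := H.deleteEdges {s(x, y)}
  have hH₁G : H₁ ≤ G := (deleteEdges_le _).trans hH.1
  have hreach {a b : V} (hab : G.Adj a b) : H₁.Reachable a b :=
    reachable_deleteEdges_of_not_isBridge he <| reachable_of_edist_ne_top <|
      ne_top_of_le_ne_top (ENat.natCast_ne_top k) (hH.edist_le_of_adj hab)
  by_cases hA : ∀ a b, G.Adj a b → H₁.edist a b ≤ k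
  · refine ⟨∅, by simp, by simp, ?_, by simp⟩
    rw [fromEdgeSet_empty, sup_bot_eq]
    exact of_forall_adj hk0 hH₁G hA
  push Not at hA
  obtain ⟨u, v, huv, hkuv⟩ := hA
  refine ⟨{s(u, v)}, by simpa using huv, by simp, ?_, ?_⟩
  · change IsKSpanner G (H₁ ⊔ edge u v) k
    refine of_forall_adj hk0 (sup_le hH₁G ((edge_le_iff _).mpr (Or.inr huv))) fun a b hab => ?_
    rcases le_or_gt (H₁.edist a b) k with hkab | hkab
    · exact (edist_anti le_sup_left).trans hkab
    rw [← (hreach hab).coe_dist_eq_edist, Nat.cast_lt] at hkab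
    rw [← (hreach huv).coe_dist_eq_edist, Nat.cast_lt] at hkuv
    rw [← ((hreach hab).mono le_sup_left).coe_dist_eq_edist, Nat.cast_le]
    exact dist_sup_edge_le_of_lt_dist hk (hreach hab) (hreach huv) hkab hkuv
  · rintro f rfl w c hc hfc
    change (H₁ ⊔ edge u v).Walk w w at c
    have hshort := hc.isTrail.edist_deleteEdges_lt_length hfc
    have hsub : (H₁ ⊔ edge u v).deleteEdges {s(u, v)} ≤ H₁ := by
      simp [deleteEdges_sup]
    have h := (Order.add_one_le_of_lt (hkuv.trans_le (edist_anti hsub))).trans_lt hshort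
    exact_mod_cast h

end IsKSpanner

/-- there is a constant `C` such that for all sufficiently large `n`
and every `k > (2/3)n + C`, if `H` is a `k`-spanner of an `n`-vertex graph `G`
whose girth `L` satisfies `L < 2(n-k)`, then there are an edge `e` of `H` lying
on a cycle of `H` of length `L` and a set `F` of edges of `G` with `|F| ≤ 1`
such that `H' = (H \ {e}) ∪ F` is a `k`-spanner of `G` and no edge of `F` lies
on a cycle of length at most `k+1` in `H'`. -/
theorem break_cycle_add_one_edge :
    ∃ C N : ℕ, ∀ n : ℕ, N ≤ n → ∀ k : ℕ, 2 * n + 3 * C < 3 * k →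
      ∀ G H : SimpleGraph (Fin n), IsKSpanner G H k →
        ∀ L : ℕ, H.egirth = (L : ℕ∞) → (L : ℤ) < 2 * ((n : ℤ) - k) →
          ∃ e ∈ H.edgeSet, ∃ F ⊆ G.edgeSet, F.ncard ≤ 1 ∧
            (∃ (v : Fin n) (c : H.Walk v v), c.IsCycle ∧ c.length = L ∧ e ∈ c.edges) ∧
            IsKSpanner G (H.deleteEdges {e} ⊔ SimpleGraph.fromEdgeSet F) k ∧
            ∀ f ∈ F, ∀ (v : Fin n)
              (c : (H.deleteEdges {e} ⊔ SimpleGraph.fromEdgeSet F).Walk v v),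
              c.IsCycle → f ∈ c.edges → k + 1 < c.length := by
  refine ⟨0, 0, fun n _ k hk G H hH L hL _ => ?_⟩
  obtain ⟨v, c, hc, hcL⟩ := (SimpleGraph.exists_egirth_eq_length (G := H)).mpr fun hacyc => by
    simp [hacyc.egirth_eq_top] at hL
  obtain ⟨e, he⟩ : ∃ e, e ∈ c.edges := List.exists_mem_of_length_pos
    (by have := hc.three_le_length; rw [SimpleGraph.Walk.length_edges]; omega)
  obtain ⟨F, hFG, hF, hspan, hFcycle⟩ := hH.exists_deleteEdges_sup_isKSpanner
    (by simp only [Fintype.card_fin]; omega) (by omega) fun hb => hb.notMem_edges_of_isCycle hc he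
  exact ⟨e, c.edges_subset_edgeSet he, F, hFG, hF,
    ⟨v, c, hc, by exact_mod_cast hcL.symm.trans hL, he⟩, hspan, hFcycle⟩
end
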